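/- Let X be a variety over a finite field F_q and let n < 0 be an integer. Then ζ(X, n) ≠ 0 and ζ(X, s) has no pole at s = n; equivalently, q^{-n} is neither a zero nor a pole of the Hasse–Weil zeta function Z(X, t). -/

import Mathlib

/-!
`Z` has integer coefficients: through degree `K` it agrees with `∏_{d ≤ K} (1 - t^d)^{-a_d}`,
where `a_d` is the number of closed points of degree `d`, because the two series have the same
logarithmic derivative `t Z'/Z` through degree `K`. So `Z` lies in `1 + tℤ⟦t⟧` and is a unit
there. For an integer `c` that is not a unit (such as `q^{-n}`), truncating `P = QZ` at degree `M`
and clearing denominators gives `P(c) ≡ Q(c) Z_{<M}(c) mod c^M` in `ℤ` for every `M`; hence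
`Q(c) = 0` forces `P(c) = 0`, and, using `Q = P Z⁻¹`, conversely. Coprimality rules out a common
root, so neither vanishes.
-/

open AlgebraicGeometry

section

open PowerSeries

section LogarithmicDerivative

variable {R : Type*} [CommSemiring R]

theorem coeff_X_mul_derivative (f : R⟦X⟧) (k : ℕ) :
    coeff k (X * d⁄dX R f) = k • coeff k f := by
  cases k with
  | zero => simp
  | succ k => rw [coeff_succ_X_mul, coeff_derivative, nsmul_eq_mul, mul_comm, Nat.cast_succ]

theorem X_mul_derivative_mul (f g : R⟦X⟧) :
    X * d⁄dX R (f * g) = X * d⁄dX R f * g + f * (X * d⁄dX R g) := by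
  rw [Derivation.leibniz, smul_eq_mul, smul_eq_mul]
  ring

theorem X_mul_derivative_prod {ι : Type*} (s : Finset ι) (f e : ι → R⟦X⟧)
    (h : ∀ i ∈ s, X * d⁄dX R (f i) = e i * f i) :
    X * d⁄dX R (∏ i ∈ s, f i) = (∑ i ∈ s, e i) * ∏ i ∈ s, f i := by
  classical
  induction s using Finset.induction_on with
  | empty => simp
  | insert i s hi ih =>
    rw [Finset.prod_insert hi, Finset.sum_insert hi, X_mul_derivative_mul,
      h i (Finset.mem_insert_self i s), ih fun j hj => h j (Finset.mem_insert_of_mem hj)]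
    ring

theorem X_mul_derivative_pow {f e : R⟦X⟧} (h : X * d⁄dX R f = e * f) (a : ℕ) :
    X * d⁄dX R (f ^ a) = (a • e) * f ^ a := by
  simpa using X_mul_derivative_prod (Finset.range a) (fun _ => f) (fun _ => e) fun _ _ => h

end LogarithmicDerivative

section InvOneSubXPow

noncomputable def invOneSubXPow (R : Type*) [Semiring R] (d : ℕ) : R⟦X⟧ :=
  mk fun k => if d ∣ k then 1 else 0

variable {R : Type*} [CommRing R] {d : ℕ}

theorem invOneSubXPow_mul_one_sub_X_pow (hd : d ≠ 0) :
    invOneSubXPow R d * (1 - X ^ d) = 1 := by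
  have : invOneSubXPow R d = expand d hd (mk 1) := by
    ext k
    simp [invOneSubXPow, coeff_expand]
  rw [this, ← expand_X d hd, ← map_one (expand d hd), ← map_sub, ← map_mul,
    mk_one_mul_one_sub_eq_one, map_one]

theorem map_invOneSubXPow {S : Type*} [CommRing S] (f : R →+* S) :
    map f (invOneSubXPow R d) = invOneSubXPow S d := by
  ext k
  simp [invOneSubXPow, apply_ite f]

theorem coeff_X_pow_mul_invOneSubXPow (hd : d ≠ 0) (k : ℕ) :
    coeff k (X ^ d * invOneSubXPow R d) = if d ∈ k.divisors then 1 else 0 := by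
  simp only [coeff_X_pow_mul', invOneSubXPow, coeff_mk, Nat.mem_divisors]
  by_cases hdk : d ≤ k
  · simp [hdk, Nat.dvd_sub_iff_left hdk dvd_rfl, ((Nat.pos_of_ne_zero hd).trans_le hdk).ne']
  · have : ¬(d ∣ k ∧ k ≠ 0) := fun h => hdk (Nat.le_of_dvd (Nat.pos_of_ne_zero h.2) h.1)
    simp [hdk, this]

theorem X_mul_derivative_one_sub_X_pow (hd : d ≠ 0) :
    X * d⁄dX R (1 - X ^ d) = -(d • (X ^ d * invOneSubXPow R d)) * (1 - X ^ d) := by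
  rw [neg_mul, smul_mul_assoc, mul_assoc, invOneSubXPow_mul_one_sub_X_pow hd, mul_one]
  obtain ⟨e, rfl⟩ := Nat.exists_eq_add_one_of_ne_zero hd
  rw [map_sub, derivative_one, derivative_pow, derivative_X, Nat.add_sub_cancel, nsmul_eq_mul]
  ring

end InvOneSubXPow

section Integrality

variable {R : Type*} [CommRing R]

theorem X_pow_dvd_sub_one_of_X_mul_derivative_eq [IsAddTorsionFree R] {G H : R⟦X⟧} {n : ℕ}
    (hG : X * d⁄dX R G = H * G) (hH : X ^ n ∣ H) (hG0 : constantCoeff G = 1) :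
    X ^ n ∣ G - 1 := by
  refine X_pow_dvd_iff.mpr fun k hk => ?_
  cases k with
  | zero => simp [hG0]
  | succ k =>
    have : (k + 1) • coeff (k + 1) G = 0 := by
      rw [← coeff_X_mul_derivative, hG]
      exact X_pow_dvd_iff.mp (dvd_mul_of_dvd_left hH G) _ hk
    rw [map_sub, coeff_one, if_neg k.succ_ne_zero, sub_zero]
    exact (nsmul_eq_zero_iff_right k.succ_ne_zero).mp this

theorem coeff_sum_X_pow_mul_invOneSubXPow (a : ℕ → ℕ) {k K : ℕ} (hk : k ≤ K) :
    coeff k (∑ d ∈ Finset.Icc 1 K, (d * a d) • (X ^ d * invOneSubXPow R d)) =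
      ∑ d ∈ k.divisors, ((d * a d : ℕ) : R) := by
  have hsub : k.divisors ⊆ Finset.Icc 1 K := fun d hd =>
    Finset.mem_Icc.mpr ⟨Nat.pos_of_mem_divisors hd, (Nat.divisor_le hd).trans hk⟩
  rw [map_sum, ← Finset.inter_eq_right.mpr hsub, ← Finset.sum_ite_mem]
  refine Finset.sum_congr rfl fun d hd => ?_
  rw [map_nsmul, coeff_X_pow_mul_invOneSubXPow (Nat.one_le_iff_ne_zero.mp (Finset.mem_Icc.mp hd).1),
    smul_ite]
  simp

theorem coeff_eq_coeff_prod_invOneSubXPow_pow [IsAddTorsionFree R] {N a : ℕ → ℕ}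
    (hN : ∀ k, N k = ∑ d ∈ k.divisors, d * a d) {Z : R⟦X⟧} (hZ0 : constantCoeff Z = 1)
    (hZ : X * d⁄dX R Z = mk (fun k => (N k : R)) * Z) (K : ℕ) :
    coeff K Z = coeff K (∏ d ∈ Finset.Icc 1 K, invOneSubXPow R d ^ a d) := by
  set s := Finset.Icc 1 K
  set W := ∏ d ∈ s, invOneSubXPow R d ^ a d
  set Y := ∏ d ∈ s, (1 - X ^ d : R⟦X⟧) ^ a d
  set E := ∑ d ∈ s, (d * a d) • (X ^ d * invOneSubXPow R d) with hE
  have hs : ∀ d ∈ s, d ≠ 0 := fun d hd => Nat.one_le_iff_ne_zero.mp (Finset.mem_Icc.mp hd).1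
  have hWY : W * Y = 1 := by
    rw [← Finset.prod_mul_distrib]
    exact Finset.prod_eq_one fun d hd => by
      rw [← mul_pow, invOneSubXPow_mul_one_sub_X_pow (hs d hd), one_pow]
  have hY : X * d⁄dX R Y = -E * Y := by
    rw [X_mul_derivative_prod s _ _ fun d hd =>
      X_mul_derivative_pow (X_mul_derivative_one_sub_X_pow (hs d hd)) (a d), hE,
      ← Finset.sum_neg_distrib]
    refine congrArg (· * Y) (Finset.sum_congr rfl fun d _ => ?_)
    rw [smul_neg, smul_smul, mul_comm]
  have hYZ : X * d⁄dX R (Y * Z) = (mk (fun k => (N k : R)) - E) * (Y * Z) := by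
    rw [X_mul_derivative_mul, hY, hZ]
    ring
  have hNE : X ^ (K + 1) ∣ mk (fun k => (N k : R)) - E := X_pow_dvd_iff.mpr fun k hk => by
    rw [map_sub, coeff_mk, coeff_sum_X_pow_mul_invOneSubXPow a (Nat.lt_succ_iff.mp hk), hN]
    push_cast
    exact sub_self _
  have hYZ0 : constantCoeff (Y * Z) = 1 := by
    rw [map_mul, hZ0, mul_one, map_prod]
    exact Finset.prod_eq_one fun d hd => by simp [zero_pow (hs d hd)]
  have hZW : Z - W = W * (Y * Z - 1) := by
    linear_combination (-Z) * hWY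
  rw [← sub_eq_zero, ← map_sub, hZW]
  exact X_pow_dvd_iff.mp
    (dvd_mul_of_dvd_right (X_pow_dvd_sub_one_of_X_mul_derivative_eq hYZ hNE hYZ0) W) K
    K.lt_succ_self

theorem exists_isUnit_map_intCast_eq_of_X_mul_derivative_eq [IsAddTorsionFree R] {N a : ℕ → ℕ}
    (hN : ∀ k, N k = ∑ d ∈ k.divisors, d * a d)
    {Z : R⟦X⟧} (hZ0 : constantCoeff Z = 1) (hZ : X * d⁄dX R Z = mk (fun k => (N k : R)) * Z) :
    ∃ W : ℤ⟦X⟧, IsUnit W ∧ map (Int.castRingHom R) W = Z := by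
  refine ⟨mk fun K => coeff K (∏ d ∈ Finset.Icc 1 K, invOneSubXPow ℤ d ^ a d), ?_, ?_⟩
  · simp [isUnit_iff_constantCoeff, ← coeff_zero_eq_constantCoeff_apply]
  · ext K
    rw [coeff_map, coeff_mk, ← coeff_map, map_prod,
      coeff_eq_coeff_prod_invOneSubXPow_pow hN hZ0 hZ K]
    simp only [map_pow, map_invOneSubXPow]

end Integrality

section EvalAtNonUnit

theorem X_pow_dvd_sub_mul_trunc {R : Type*} [CommRing R] {A B : Polynomial R} {Z : R⟦X⟧}
    (h : (A : R⟦X⟧) = B * Z) (M : ℕ) : Polynomial.X ^ M ∣ A - B * trunc M Z := by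
  refine Polynomial.X_pow_dvd_iff.mpr fun k hk => ?_
  have hZ : X ^ M ∣ Z - (trunc M Z : R⟦X⟧) := X_pow_dvd_iff.mpr fun j hj => by
    rw [map_sub, Polynomial.coeff_coe, coeff_trunc, if_pos hj, sub_self]
  rw [← Polynomial.coeff_coe, Polynomial.coe_sub, Polynomial.coe_mul, h, ← mul_sub]
  exact X_pow_dvd_iff.mp (dvd_mul_of_dvd_right hZ _) k hk

theorem Int.eq_zero_of_forall_pow_dvd {c x : ℤ} (hc : ¬IsUnit c) (h : ∀ M : ℕ, c ^ M ∣ x) :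
    x = 0 := by
  by_contra hx
  obtain ⟨M, hM⟩ :=
    Int.finiteMultiplicity_iff.mpr ⟨fun h1 => hc (Int.isUnit_iff_natAbs_eq.mpr h1), hx⟩
  exact hM (h (M + 1))

theorem eval_eq_zero_of_coe_eq_mul {A B : Polynomial ℤ} {W : ℤ⟦X⟧} (h : (A : ℤ⟦X⟧) = B * W)
    {c : ℤ} (hc : ¬IsUnit c) (hB : B.eval c = 0) : A.eval c = 0 :=
  Int.eq_zero_of_forall_pow_dvd hc fun M => by
    simpa [hB] using Polynomial.eval_dvd (x := c) (X_pow_dvd_sub_mul_trunc h M)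

theorem eval_eq_zero_of_coe_eq_mul_map_intCast {P Q : Polynomial ℚ} {W : ℤ⟦X⟧}
    (h : (P : ℚ⟦X⟧) = Q * map (Int.castRingHom ℚ) W) {c : ℤ} (hc : ¬IsUnit c)
    (hQ : Q.eval (c : ℚ) = 0) : P.eval (c : ℚ) = 0 := by
  obtain ⟨b, hb, hA⟩ := IsLocalization.integerNormalization_spec (nonZeroDivisors ℤ) P
  obtain ⟨b', hb', hB⟩ := IsLocalization.integerNormalization_spec (nonZeroDivisors ℤ) Q
  set A := IsLocalization.integerNormalization (nonZeroDivisors ℤ) P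
  set B := IsLocalization.integerNormalization (nonZeroDivisors ℤ) Q
  rw [algebraMap_int_eq] at hA hB
  have hAB : ((b' • A : Polynomial ℤ) : ℤ⟦X⟧) = (b • B : Polynomial ℤ) * W := by
    refine map_injective (Int.castRingHom ℚ) Int.cast_injective ?_
    have hcoe := map_zsmul (Polynomial.coeToPowerSeries.ringHom (R := ℚ))
    simp only [Polynomial.coeToPowerSeries.ringHom_apply] at hcoe
    simp only [map_mul, ← Polynomial.polynomial_map_coe, Polynomial.map_smul, hA, hB, eq_intCast,
      Int.cast_smul_eq_zsmul, hcoe, h, smul_mul_assoc]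
    exact smul_comm b' b _
  have hBc : B.eval c = 0 := by simpa [hQ] using congrArg (Polynomial.eval (c : ℚ)) hB
  have hAc : A.eval c = 0 := by
    simpa [nonZeroDivisors.ne_zero hb'] using eval_eq_zero_of_coe_eq_mul hAB hc (by simp [hBc])
  simpa [hAc, nonZeroDivisors.ne_zero hb] using (congrArg (Polynomial.eval (c : ℚ)) hA).symm

theorem eval_eq_zero_iff_of_coe_eq_mul_map_intCast {P Q : Polynomial ℚ} {W : ℤ⟦X⟧}
    (hW : IsUnit W) (h : (P : ℚ⟦X⟧) = Q * map (Int.castRingHom ℚ) W) {c : ℤ} (hc : ¬IsUnit c) :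
    P.eval (c : ℚ) = 0 ↔ Q.eval (c : ℚ) = 0 := by
  obtain ⟨w, rfl⟩ := hW
  have h' : (Q : ℚ⟦X⟧) = P * map (Int.castRingHom ℚ) ↑w⁻¹ := by
    rw [h, mul_assoc, ← map_mul, Units.mul_inv, map_one, mul_one]
  exact ⟨eval_eq_zero_of_coe_eq_mul_map_intCast h' hc, eval_eq_zero_of_coe_eq_mul_map_intCast h hc⟩

theorem eval_ne_zero_of_isCoprime_of_coe_eq_mul_map_intCast {P Q : Polynomial ℚ}
    (hPQ : IsCoprime P Q) {W : ℤ⟦X⟧} (hW : IsUnit W)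
    (h : (P : ℚ⟦X⟧) = Q * map (Int.castRingHom ℚ) W) {c : ℤ} (hc : ¬IsUnit c) :
    P.eval (c : ℚ) ≠ 0 ∧ Q.eval (c : ℚ) ≠ 0 := by
  have hPQc : ¬(P.eval (c : ℚ) = 0 ∧ Q.eval (c : ℚ) = 0) := by
    rintro ⟨hP, hQ⟩
    obtain ⟨u, v, huv⟩ := hPQ
    simpa [hP, hQ] using congrArg (Polynomial.eval (c : ℚ)) huv
  rw [eval_eq_zero_iff_of_coe_eq_mul_map_intCast hW h hc, and_self] at hPQc
  rw [Ne, eval_eq_zero_iff_of_coe_eq_mul_map_intCast hW h hc, and_self]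
  exact hPQc

end EvalAtNonUnit

end

theorem hasseWeil_zeta_no_zero_no_pole_at_negative_integers_general
    (F : Type) [Field F] [Fintype F] (q : ℕ) (hq : q = Fintype.card F)
    (X : Scheme)
    (N : ℕ → ℕ)
    (hN : ∀ k, N k = ∑ d ∈ k.divisors,
      d * Nat.card {x : X // IsClosed ({x} : Set X) ∧ Nat.card (X.residueField x) = q ^ d})
    (Z : PowerSeries ℚ) (hZ0 : Z.coeff 0 = 1)
    (hZ : PowerSeries.X * PowerSeries.derivative ℚ Z =
      PowerSeries.mk (fun k => (N k : ℚ)) * Z)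
    (n : ℤ) (hn : n < 0) :
    ∀ P Q : Polynomial ℚ, IsCoprime P Q → Q.coeff 0 = 1 →
      (P : PowerSeries ℚ) = (Q : PowerSeries ℚ) * Z →
      Polynomial.eval ((q : ℚ) ^ (-n)) P ≠ 0 ∧ Polynomial.eval ((q : ℚ) ^ (-n)) Q ≠ 0 := by
  intro P Q hPQ _ hPQZ
  rw [PowerSeries.coeff_zero_eq_constantCoeff_apply] at hZ0
  obtain ⟨W, hW, rfl⟩ := exists_isUnit_map_intCast_eq_of_X_mul_derivative_eq hN hZ0 hZ
  obtain ⟨m, hm⟩ := Int.eq_ofNat_of_zero_le (by omega : 0 ≤ -n)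
  have hc : ¬IsUnit ((q : ℤ) ^ m) := by
    have hq2 : 2 ≤ q := hq ▸ Fintype.one_lt_card
    have : (2 : ℤ) ≤ (q : ℤ) ^ m := by exact_mod_cast hq2.trans (Nat.le_self_pow (by omega) q)
    rw [Int.isUnit_iff]
    omega
  rw [hm, zpow_natCast]
  exact_mod_cast eval_ne_zero_of_isCoprime_of_coe_eq_mul_map_intCast hPQ hW hPQZ hc

theorem hasseWeil_zeta_no_zero_no_pole_at_negative_integers
    (F : Type) [Field F] [Fintype F] (q : ℕ) (hq : q = Fintype.card F)
    (X : Scheme) (f : X ⟶ Spec (CommRingCat.of F))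
    [IsSeparated f] [LocallyOfFiniteType f] [QuasiCompact f]
    (N : ℕ → ℕ)
    (hN : ∀ k, N k = ∑ d ∈ k.divisors,
      d * Nat.card {x : X // IsClosed ({x} : Set X) ∧ Nat.card (X.residueField x) = q ^ d})
    (Z : PowerSeries ℚ) (hZ0 : Z.coeff 0 = 1)
    (hZ : PowerSeries.X * PowerSeries.derivative ℚ Z =
      PowerSeries.mk (fun k => (N k : ℚ)) * Z)
    (n : ℤ) (hn : n < 0) :
    ∀ P Q : Polynomial ℚ, IsCoprime P Q → Q.coeff 0 = 1 →
      (P : PowerSeries ℚ) = (Q : PowerSeries ℚ) * Z →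
      Polynomial.eval ((q : ℚ) ^ (-n)) P ≠ 0 ∧ Polynomial.eval ((q : ℚ) ^ (-n)) Q ≠ 0 :=
  hasseWeil_zeta_no_zero_no_pole_at_negative_integers_general F q hq X N hN Z hZ0 hZ n hn
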